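/- arXiv:2010.10725 — 2 statements merged into one kernel-verified Lean document; each statement's English description precedes it below -/
import Mathlib

section
/- Let k₁ > 0, let a, b, c be distinct reals with (a−b)(b−c)(c−a) > 0, let g be the element of SL(2,ℝ) sending (∞, −1, 0) to (a, b, c), and let ι₁ = (1/√k₁)·[[k₁, 1+k₁],[−k₁, −k₁]]. Then the Möbius transformation h₁ = g·ι₁·g⁻¹ satisfies h₁(a) = b, h₁(b) = a, and h₁(c) = (k₁·b·(c−a) + a·(c−b)) / (k₁·(c−a) + (c−b)). -/
/-!
A matrix acts on `ℝ ∪ {∞}` through its linear action on `ℝ²`, the point `x` being the line of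
`(x, 1)` and `∞` the line of `(1, 0)`. Up to scalars, `g` sends `∞, -1, 0` to `a, b, c` and `ι₁`
swaps `∞` and `-1`, so `h₁ = g ι₁ g⁻¹` swaps `a` and `b` and sends `c` to `g (ι₁ 0)`. Computing
with vectors instead of with `moeb` never evaluates a Möbius map at a pole, and the scalar factors
of `g` and `ι₁` drop out.
-/

open Matrix Real

/-- The Möbius action of a 2×2 real matrix on a real number (away from poles). -/
noncomputable def moeb (M : Matrix (Fin 2) (Fin 2) ℝ) (x : ℝ) : ℝ :=
  (M 0 0 * x + M 0 1) / (M 1 0 * x + M 1 1)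

lemma moeb_smul {α : ℝ} (hα : α ≠ 0) (M : Matrix (Fin 2) (Fin 2) ℝ) (x : ℝ) :
    moeb (α • M) x = moeb M x := by
  simp only [moeb, Matrix.smul_apply, smul_eq_mul, mul_assoc, ← mul_add, mul_div_mul_left _ _ hα]

lemma moeb_eq_div_of_mulVec_eq_smul {M : Matrix (Fin 2) (Fin 2) ℝ} {x μ p q : ℝ} (hμ : μ ≠ 0)
    (h : M *ᵥ ![x, 1] = μ • ![p, q]) : moeb M x = p / q := by
  have hM : moeb M x = (M *ᵥ ![x, 1]) 0 / (M *ᵥ ![x, 1]) 1 := by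
    simp [moeb, mulVec_fin_two, mul_comm]
  simp [hM, h, mul_div_mul_left _ _ hμ]

lemma moeb_conj_eq_div {A B : Matrix (Fin 2) (Fin 2) ℝ} (hA : IsUnit A.det) {u : Fin 2 → ℝ}
    {α β x p q : ℝ} (hα : α ≠ 0) (hβ : β ≠ 0) (hu : A *ᵥ u = α • ![x, 1])
    (hv : A *ᵥ (B *ᵥ u) = β • ![p, q]) : moeb (A * B * A⁻¹) x = p / q := by
  refine moeb_eq_div_of_mulVec_eq_smul (μ := α⁻¹ * β) (by positivity) ?_
  calc (A * B * A⁻¹) *ᵥ ![x, 1] = α⁻¹ • (A * B * A⁻¹) *ᵥ (A *ᵥ u) := by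
        rw [hu, mulVec_smul, inv_smul_smul₀ hα]
    _ = α⁻¹ • A *ᵥ (B *ᵥ u) := by
        rw [mulVec_mulVec, nonsing_inv_mul_cancel_right A _ hA, mulVec_mulVec]
    _ = (α⁻¹ * β) • ![p, q] := by rw [hv, smul_smul]

lemma smul_mul_smul_mul_inv_smul {n K : Type*} [Fintype n] [DecidableEq n] [Field K] {s : K}
    (hs : s ≠ 0) (t : K) {A : Matrix n n K} (hA : IsUnit A.det) (B : Matrix n n K) :
    s • A * (t • B) * (s • A)⁻¹ = t • (A * B * A⁻¹) := by
  rw [show s • A = Units.mk0 s hs • A from rfl, inv_smul' A _ hA]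
  simp [Units.smul_def, smul_smul, mul_comm t s, inv_mul_cancel_left₀ hs]

/-- `g` without its normalising scalar: it sends `∞, -1, 0` to `a, b, c`. -/
def triangleMatrix (a b c : ℝ) : Matrix (Fin 2) (Fin 2) ℝ :=
  !![a * (c - b), c * (a - b); c - b, a - b]

/-- `ι₁` without its normalising scalar: it swaps `∞` and `-1`. -/
def involutionMatrix (k : ℝ) : Matrix (Fin 2) (Fin 2) ℝ :=
  !![k, 1 + k; -k, -k]

section

variable (a b c k : ℝ)

lemma det_triangleMatrix : (triangleMatrix a b c).det = (a - b) * (b - c) * (c - a) := by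
  rw [triangleMatrix, det_fin_two_of]
  ring

lemma triangleMatrix_mulVec_infty : triangleMatrix a b c *ᵥ ![1, 0] = (c - b) • ![a, 1] := by
  simp only [triangleMatrix, mulVec_fin_two, smul_vec2, of_apply, cons_val_zero, cons_val_one,
    smul_eq_mul]
  exact vec2_eq (by ring) (by ring)

lemma triangleMatrix_mulVec_neg_one : triangleMatrix a b c *ᵥ ![-1, 1] = (a - c) • ![b, 1] := by
  simp only [triangleMatrix, mulVec_fin_two, smul_vec2, of_apply, cons_val_zero, cons_val_one,
    smul_eq_mul]
  exact vec2_eq (by ring) (by ring)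

lemma triangleMatrix_mulVec_zero : triangleMatrix a b c *ᵥ ![0, 1] = (a - b) • ![c, 1] := by
  simp only [triangleMatrix, mulVec_fin_two, smul_vec2, of_apply, cons_val_zero, cons_val_one,
    smul_eq_mul]
  exact vec2_eq (by ring) (by ring)

lemma involutionMatrix_mulVec_infty : involutionMatrix k *ᵥ ![1, 0] = (-k) • ![-1, 1] := by
  simp only [involutionMatrix, mulVec_fin_two, smul_vec2, of_apply, cons_val_zero, cons_val_one,
    smul_eq_mul]
  exact vec2_eq (by ring) (by ring)

lemma involutionMatrix_mulVec_neg_one : involutionMatrix k *ᵥ ![-1, 1] = ![1, 0] := by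
  simp only [involutionMatrix, mulVec_fin_two, of_apply, cons_val_zero, cons_val_one]
  exact vec2_eq (by ring) (by ring)

lemma triangleMatrix_mulVec_involutionMatrix_mulVec_zero :
    triangleMatrix a b c *ᵥ (involutionMatrix k *ᵥ ![0, 1]) =
      ![k * b * (c - a) + a * (c - b), k * (c - a) + (c - b)] := by
  simp only [triangleMatrix, involutionMatrix, mulVec_fin_two, of_apply, cons_val_zero,
    cons_val_one]
  exact vec2_eq (by ring) (by ring)

end

theorem recursion_involution_general (k₁ : ℝ) (hk₁ : 0 < k₁)
    (a b c : ℝ)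
    (hpos : (a - b) * (b - c) * (c - a) > 0)
    (g ι₁ h₁ : Matrix (Fin 2) (Fin 2) ℝ)
    (hg : g = (1 / Real.sqrt ((a - b) * (b - c) * (c - a))) •
      !![a * (c - b), c * (a - b); c - b, a - b])
    (hι₁ : ι₁ = (1 / Real.sqrt k₁) • !![k₁, 1 + k₁; -k₁, -k₁])
    (hh₁ : h₁ = g * ι₁ * g⁻¹) :
    moeb h₁ a = b ∧ moeb h₁ b = a ∧
      moeb h₁ c = (k₁ * b * (c - a) + a * (c - b)) / (k₁ * (c - a) + (c - b)) := by
  have hab : a - b ≠ 0 := fun h => by simp [h] at hpos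
  have hac : a - c ≠ 0 := fun h => by simp [sub_eq_zero.1 h] at hpos
  have hcb : c - b ≠ 0 := fun h => by simp [sub_eq_zero.1 h] at hpos
  set A := triangleMatrix a b c
  have hA : IsUnit A.det := by
    rw [det_triangleMatrix, isUnit_iff_ne_zero]
    exact hpos.ne'
  have hmoeb : moeb h₁ = moeb (A * involutionMatrix k₁ * A⁻¹) := by
    have hg' : g = (1 / √((a - b) * (b - c) * (c - a))) • A := hg
    have hι₁' : ι₁ = (1 / √k₁) • involutionMatrix k₁ := hι₁
    funext x
    rw [hh₁, hg', hι₁', smul_mul_smul_mul_inv_smul (by positivity) _ hA, moeb_smul (by positivity)]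
  refine ⟨?_, ?_, ?_⟩
  · rw [hmoeb, ← div_one b]
    refine moeb_conj_eq_div hA hcb (mul_ne_zero (neg_ne_zero.2 hk₁.ne') hac)
      (triangleMatrix_mulVec_infty a b c) ?_
    rw [involutionMatrix_mulVec_infty, mulVec_smul, triangleMatrix_mulVec_neg_one, smul_smul]
  · rw [hmoeb, ← div_one a]
    refine moeb_conj_eq_div hA hac hcb (triangleMatrix_mulVec_neg_one a b c) ?_
    rw [involutionMatrix_mulVec_neg_one, triangleMatrix_mulVec_infty]
  · rw [hmoeb]
    refine moeb_conj_eq_div hA hab one_ne_zero (triangleMatrix_mulVec_zero a b c) ?_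
    rw [triangleMatrix_mulVec_involutionMatrix_mulVec_zero, one_smul]

theorem recursion_involution (k₁ : ℝ) (hk₁ : 0 < k₁)
    (a b c : ℝ) (hab : a ≠ b) (hbc : b ≠ c) (hca : c ≠ a)
    (hpos : (a - b) * (b - c) * (c - a) > 0)
    (g ι₁ h₁ : Matrix (Fin 2) (Fin 2) ℝ)
    (hg : g = (1 / Real.sqrt ((a - b) * (b - c) * (c - a))) •
      !![a * (c - b), c * (a - b); c - b, a - b])
    (hι₁ : ι₁ = (1 / Real.sqrt k₁) • !![k₁, 1 + k₁; -k₁, -k₁])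
    (hh₁ : h₁ = g * ι₁ * g⁻¹) :
    moeb h₁ a = b ∧ moeb h₁ b = a ∧
      moeb h₁ c = (k₁ * b * (c - a) + a * (c - b)) / (k₁ * (c - a) + (c - b)) :=
  recursion_involution_general k₁ hk₁ a b c hpos g ι₁ h₁ hg hι₁ hh₁
end

section
/- Let g = [[α, β],[γ, δ]] be an integer matrix with nonzero determinant, γ ≠ 0, gcd(α,β,γ,δ) = 1, and let k = gcd(α,γ), α = kα′, γ = kγ′ with gcd(α′,γ′) = 1. Then for any rational p/q in lowest terms with |p/q − α′/γ′| < 1/|γ|, writing g⁻¹(p/q) = p′/q′ in lowest terms (as a Möbius image), we have |q′| < |q|. -/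
/-!
Write `x = p / q` in lowest terms. Clearing denominators, `g⁻¹ x = (δ p - β q) / (α q - γ p)`, so the
new denominator is at most `|α q - γ p| = q · |α - γ x|`. Since `α / γ = α' / γ'`, we have
`|α - γ x| = |γ| · |x - α' / γ'| < 1`.
-/

namespace Rat

theorem mobius_eq_divInt (a b c d : ℤ) (x : ℚ) :
    (a * x + b) / (c * x + d) = Rat.divInt (a * x.num + b * x.den) (c * x.num + d * x.den) := by
  have hden : (x.den : ℚ) ≠ 0 := by exact_mod_cast x.den_nz
  rw [Rat.divInt_eq_div, ← mul_div_mul_right _ _ hden]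
  push_cast
  rw [← x.mul_den_eq_num]
  ring

theorem den_mobius_dvd (a b c d : ℤ) (x : ℚ) :
    (((a * x + b) / (c * x + d)).den : ℤ) ∣ c * x.num + d * x.den := by
  rw [mobius_eq_divInt]
  exact Rat.den_dvd _ _

theorem den_mobius_le (a b c d : ℤ) (x : ℚ) (h : c * x + d ≠ 0) :
    (((a * x + b) / (c * x + d)).den : ℚ) ≤ x.den * |c * x + d| := by
  have hlin : ((c * x.num + d * x.den : ℤ) : ℚ) = x.den * (c * x + d) := by
    push_cast
    rw [← x.mul_den_eq_num]
    ring
  have hne : c * x.num + d * x.den ≠ 0 := by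
    have : (x.den : ℚ) ≠ 0 := by exact_mod_cast x.den_nz
    exact_mod_cast hlin ▸ mul_ne_zero this h
  have hle := Int.le_of_dvd (abs_pos.mpr hne) ((dvd_abs _ _).mpr (den_mobius_dvd a b c d x))
  calc (((a * x + b) / (c * x + d)).den : ℚ) ≤ |((c * x.num + d * x.den : ℤ) : ℚ)| := by
        exact_mod_cast hle
    _ = x.den * |c * x + d| := by rw [hlin, abs_mul, Nat.abs_cast]

end Rat

theorem killer_interval_general (α β γ δ k α' γ' : ℤ)
    (hγ : γ ≠ 0)
    (hα : α = k * α') (hγ' : γ = k * γ')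
    (x : ℚ) (hx : |x - (α' : ℚ) / γ'| < 1 / |(γ : ℚ)|)
    (hden : -(γ : ℚ) * x + α ≠ 0) :
    (((δ : ℚ) * x - β) / (-(γ : ℚ) * x + α)).den < x.den := by
  have hγ'0 : (γ' : ℚ) ≠ 0 := Int.cast_ne_zero.mpr (right_ne_zero_of_mul (hγ' ▸ hγ))
  have hα_eq : (α : ℚ) = γ * (α' / γ') := by
    rw [hα, hγ']
    push_cast
    field_simp
  have hnear : |-(γ : ℚ) * x + α| < 1 := by
    have hγpos : 0 < |(γ : ℚ)| := abs_pos.mpr (by exact_mod_cast hγ)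
    rw [hα_eq, show -(γ : ℚ) * x + γ * (α' / γ') = -(γ * (x - α' / γ')) by ring, abs_neg, abs_mul]
    exact (lt_div_iff₀' hγpos).mp hx
  have hle := Rat.den_mobius_le δ (-β) (-γ) α x (by simpa using hden)
  push_cast [← sub_eq_add_neg] at hle
  have hxden : (0 : ℚ) < x.den := by exact_mod_cast x.pos
  exact_mod_cast hle.trans_lt (mul_lt_of_lt_one_right hxden hnear)

theorem killer_interval (α β γ δ k α' γ' : ℤ)
    (hdet : α * δ - β * γ ≠ 0) (hγ : γ ≠ 0)
    (hgcd : Int.gcd (Int.gcd α β) (Int.gcd γ δ) = 1)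
    (hk : (Int.gcd α γ : ℤ) = k) (hα : α = k * α') (hγ' : γ = k * γ')
    (hcop : Int.gcd α' γ' = 1)
    (x : ℚ) (hx : |x - (α' : ℚ) / γ'| < 1 / |(γ : ℚ)|)
    (hden : -(γ : ℚ) * x + α ≠ 0) :
    (((δ : ℚ) * x - β) / (-(γ : ℚ) * x + α)).den < x.den :=
  killer_interval_general α β γ δ k α' γ' hγ hα hγ' x hx hden
end
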